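/- arXiv:2006.12364 — 2 statements merged into one kernel-verified Lean document; each statement's English description precedes it below -/
import Mathlib

section
/- The Kelvin transformation preserves α-Riesz energy: for a positive measure ν with ν({y}) = 0 and its Kelvin transform ν* = K_y ν, one has ∬ |x − z|^{α−n} d(ν* ⊗ ν*)(x,z) = ∬ |x − z|^{α−n} d(ν ⊗ ν)(x,z). -/
/-! Inversion in the unit sphere about `y` multiplies distances by `1 / (|x - y| |z - y|)`, so
`|J x - J z| ^ s = |x - z| ^ s / (|x - y| ^ s |z - y| ^ s)`, where `s = α - n`. The density
`|x - y| ^ s` of the Kelvin transform supplies exactly the compensating factor in each variable;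
off the `ν ⊗ ν`-null set where a coordinate equals `y` the integrands then agree pointwise. -/

open MeasureTheory Set ENNReal

/-- The inversion with respect to the unit sphere centered at `y`. -/
noncomputable def inversion (n : ℕ) (y x : EuclideanSpace ℝ (Fin n)) :
    EuclideanSpace ℝ (Fin n) :=
  y + (‖x - y‖ ^ 2)⁻¹ • (x - y)

/-- The Kelvin transform `K_y μ`. -/
noncomputable def kelvin (n : ℕ) (α : ℝ) (y : EuclideanSpace ℝ (Fin n))
    (μ : Measure (EuclideanSpace ℝ (Fin n))) : Measure (EuclideanSpace ℝ (Fin n)) :=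
  Measure.map (inversion n y)
    (μ.withDensity fun x => ENNReal.ofReal (‖x - y‖ ^ (α - (n : ℝ))))

/-- The α-Riesz energy of a measure. -/
noncomputable def rieszEnergy (n : ℕ) (α : ℝ)
    (μ : Measure (EuclideanSpace ℝ (Fin n))) : ℝ≥0∞ :=
  ∫⁻ p : EuclideanSpace ℝ (Fin n) × EuclideanSpace ℝ (Fin n),
    ENNReal.ofReal (‖p.1 - p.2‖ ^ (α - (n : ℝ))) ∂(μ.prod μ)

namespace EuclideanGeometry

theorem rpow_dist_mul_rpow_dist_mul_rpow_dist_inversion {V P : Type*} [NormedAddCommGroup V]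
    [InnerProductSpace ℝ V] [MetricSpace P] [NormedAddTorsor V P] {c x z : P}
    (hx : x ≠ c) (hz : z ≠ c) (s : ℝ) :
    dist x c ^ s * dist z c ^ s * dist (inversion c 1 x) (inversion c 1 z) ^ s = dist x z ^ s := by
  have hxc : 0 < dist x c := dist_pos.2 hx
  have hzc : 0 < dist z c := dist_pos.2 hz
  rw [dist_inversion_inversion hx hz, ← Real.mul_rpow hxc.le hzc.le,
    ← Real.mul_rpow (by positivity) (by positivity)]
  congr 1
  field_simp

variable {E : Type*} [NormedAddCommGroup E] [InnerProductSpace ℝ E] [MeasurableSpace E]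
  [BorelSpace E] [SecondCountableTopology E]

@[fun_prop]
theorem measurable_inversion (c : E) (R : ℝ) : Measurable (inversion c R) := by
  unfold inversion
  fun_prop

theorem lintegral_rpow_dist_map_inversion_withDensity (μ : Measure E) [SFinite μ] {c : E}
    (hc : μ {c} = 0) (s : ℝ) :
    ∫⁻ p, ENNReal.ofReal (dist p.1 p.2 ^ s) ∂
        (((μ.withDensity fun x => ENNReal.ofReal (dist x c ^ s)).map (inversion c 1)).prod
          ((μ.withDensity fun x => ENNReal.ofReal (dist x c ^ s)).map (inversion c 1))) =
      ∫⁻ p, ENNReal.ofReal (dist p.1 p.2 ^ s) ∂μ.prod μ := by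
  have hJ := measurable_inversion c 1
  have hk : Measurable fun p : E × E => ENNReal.ofReal (dist p.1 p.2 ^ s) := by fun_prop
  have hw : Measurable fun x : E => ENNReal.ofReal (dist x c ^ s) := by fun_prop
  have hc' : ∀ᵐ x ∂μ, x ≠ c := measure_eq_zero_iff_ae_notMem.1 hc
  have hae : ∀ᵐ p ∂μ.prod μ, p.1 ≠ c ∧ p.2 ≠ c :=
    (Measure.quasiMeasurePreserving_fst.ae hc').and (Measure.quasiMeasurePreserving_snd.ae hc')
  rw [Measure.map_prod_map _ _ hJ hJ, lintegral_map hk (hJ.prodMap hJ), prod_withDensity hw hw,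
    lintegral_withDensity_eq_lintegral_mul _ (by fun_prop) (by fun_prop)]
  refine lintegral_congr_ae (hae.mono fun p ⟨h1, h2⟩ => ?_)
  simp only [Pi.mul_apply, Prod.map_fst, Prod.map_snd]
  rw [← ofReal_mul (by positivity), ← ofReal_mul (by positivity),
    rpow_dist_mul_rpow_dist_mul_rpow_dist_inversion h1 h2]

end EuclideanGeometry

theorem inversion_eq_euclideanGeometry_inversion (n : ℕ) (y : EuclideanSpace ℝ (Fin n)) :
    inversion n y = EuclideanGeometry.inversion y 1 := by
  funext x
  rw [inversion, EuclideanGeometry.inversion, vadd_eq_add, vsub_eq_sub, dist_eq_norm, div_pow,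
    one_pow, one_div, add_comm]

theorem stmt5_general (n : ℕ) (α : ℝ)
    (y : EuclideanSpace ℝ (Fin n)) (ν : Measure (EuclideanSpace ℝ (Fin n)))
    [IsLocallyFiniteMeasure ν] (hνy : ν {y} = 0) :
    rieszEnergy n α (kelvin n α y ν) = rieszEnergy n α ν := by
  simp only [rieszEnergy, kelvin, ← dist_eq_norm, inversion_eq_euclideanGeometry_inversion]
  exact EuclideanGeometry.lintegral_rpow_dist_map_inversion_withDensity ν hνy _

theorem stmt5 (n : ℕ) (hn : 3 ≤ n) (α : ℝ) (hα : 0 < α) (hα2 : α ≤ 2)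
    (y : EuclideanSpace ℝ (Fin n)) (ν : Measure (EuclideanSpace ℝ (Fin n)))
    [IsLocallyFiniteMeasure ν] (hνy : ν {y} = 0) :
    rieszEnergy n α (kelvin n α y ν) = rieszEnergy n α ν :=
  stmt5_general n α y ν hνy
end

section
/- Under the inversion with respect to the unit sphere centered at the origin in ℝⁿ, the image measure of Lebesgue measure transforms by dx* = |x|^{−2n} dx; equivalently, for every nonnegative measurable function f, ∫ f(J_0(x)) |x|^{−2n} dx = ∫ f(x*) dx*. -/
open MeasureTheory Set ENNReal

/-- The inversion with respect to the unit sphere centered at the origin. -/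
noncomputable def inversion0 (n : ℕ) (x : EuclideanSpace ℝ (Fin n)) :
    EuclideanSpace ℝ (Fin n) :=
  (‖x‖ ^ 2)⁻¹ • x

/-!
The derivative of the inversion `x ↦ c + (R / |x - c|)² (x - c)` at `x` is `(R / |x - c|)²` times
a reflection, so its Jacobian is `(R / |x - c|)^(2n)`. Since the inversion is an involution of
`ℝⁿ \ {c}`, the change of variables formula gives the claim.
-/

namespace EuclideanGeometry

variable {F : Type*} [NormedAddCommGroup F] [InnerProductSpace ℝ F]

theorem image_inversion_compl_center (c : F) {R : ℝ} (hR : R ≠ 0) :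
    inversion c R '' {c}ᶜ = {c}ᶜ :=
  (inversion_involutive c hR).image_eq_preimage_symm ▸
    Set.ext fun _ ↦ (inversion_eq_center hR).not

variable [FiniteDimensional ℝ F]

theorem abs_det_fderiv_inversion (c x : F) (R : ℝ) :
    |((R / dist x c) ^ 2 • ((ℝ ∙ (x - c))ᗮ.reflection : F →L[ℝ] F)).det| =
      (R / dist x c) ^ (2 * Module.finrank ℝ F) := by
  rw [ContinuousLinearMap.det, ContinuousLinearMap.toLinearMap_smul, LinearMap.det_smul]
  erw [Submodule.det_reflection]
  simp [abs_pow, pow_mul]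

variable [MeasurableSpace F] [BorelSpace F] (μ : Measure F) [μ.IsAddHaarMeasure]

theorem setLIntegral_compl_center_inversion (c : F) {R : ℝ} (hR : R ≠ 0) (g : F → ℝ≥0∞) :
    ∫⁻ x in {c}ᶜ, ENNReal.ofReal ((R / dist x c) ^ (2 * Module.finrank ℝ F)) *
        g (inversion c R x) ∂μ = ∫⁻ x in {c}ᶜ, g x ∂μ := by
  have key := lintegral_image_eq_lintegral_abs_det_fderiv_mul μ
    (measurableSet_singleton c).compl
    (fun x hx ↦ (hasFDerivAt_inversion (R := R) hx).hasFDerivWithinAt)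
    (inversion_involutive c hR).injective.injOn g
  simp_rw [image_inversion_compl_center c hR, abs_det_fderiv_inversion] at key
  exact key.symm

end EuclideanGeometry

theorem inversion0_eq_inversion (n : ℕ) : inversion0 n = EuclideanGeometry.inversion 0 1 := by
  ext1 x
  simp [inversion0, EuclideanGeometry.inversion]

theorem stmt6_general (n : ℕ)
    (f : EuclideanSpace ℝ (Fin n) → ℝ≥0∞) :
    ∫⁻ x in ({0}ᶜ : Set (EuclideanSpace ℝ (Fin n))),
        f (inversion0 n x) * ENNReal.ofReal (‖x‖ ^ (-(2 * (n : ℝ)))) ∂volume =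
      ∫⁻ x in ({0}ᶜ : Set (EuclideanSpace ℝ (Fin n))), f x ∂volume := by
  rw [← EuclideanGeometry.setLIntegral_compl_center_inversion volume 0 one_ne_zero f,
    inversion0_eq_inversion]
  congr 1 with x
  rw [mul_comm, finrank_euclideanSpace_fin, dist_zero_right, Real.rpow_neg (norm_nonneg x),
    one_div, inv_pow, ← Real.rpow_natCast, Nat.cast_mul, Nat.cast_ofNat]

theorem stmt6 (n : ℕ) (hn : 1 ≤ n)
    (f : EuclideanSpace ℝ (Fin n) → ℝ≥0∞) (hf : Measurable f) :
    ∫⁻ x in ({0}ᶜ : Set (EuclideanSpace ℝ (Fin n))),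
        f (inversion0 n x) * ENNReal.ofReal (‖x‖ ^ (-(2 * (n : ℝ)))) ∂volume =
      ∫⁻ x in ({0}ᶜ : Set (EuclideanSpace ℝ (Fin n))), f x ∂volume :=
  stmt6_general n f
end
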